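/- Let X_1 ∈ ℂ^{k×k} and let p(λ) = Σ_{m=0}^ℓ p_m λ^m be a complex polynomial. Then det(Σ_{m=1}^ℓ p_m Σ_{i=0}^{m−1} (X_1ᵀ)^i ⊗ X_1^{m−1−i}) ≠ 0 if and only if Σ_{m=1}^ℓ p_m Σ_{i=0}^{m−1} μ_1^i μ_2^{m−1−i} ≠ 0 for every pair μ_1, μ_2 of eigenvalues of X_1. -/

import Mathlib

open Polynomial Matrix Kronecker

noncomputable section

/-- Evaluating the characteristic polynomial at `μ`. -/
lemma my_eval_charpoly {n : Type*} [Fintype n] [DecidableEq n] {R : Type*} [CommRing R]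
    (M : Matrix n n R) (μ : R) :
    M.charpoly.eval μ = (Matrix.diagonal (fun _ => μ) - M).det := by
  rw [Matrix.charpoly, ← Polynomial.coe_evalRingHom, RingHom.map_det]
  congr 1
  ext i j
  by_cases h : i = j <;>
    simp [Matrix.charmatrix_apply, Matrix.diagonal, h]

/-- Diagonal entries of a product of triangular matrices. -/
lemma diag_mul_of_triangular {ι α R : Type*} [Fintype ι] [LinearOrder α] [CommRing R]
    {b : ι → α} (hb : Function.Injective b) {A B : Matrix ι ι R}
    (hA : A.BlockTriangular b) (hB : B.BlockTriangular b) (i : ι) :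
    (A * B) i i = A i i * B i i := by
  rw [Matrix.mul_apply]
  apply Finset.sum_eq_single_of_mem i (Finset.mem_univ i)
  intro j _ hj
  rcases lt_or_gt_of_ne (fun h : b j = b i => hj (hb h)) with h | h
  · rw [hA h, zero_mul]
  · rw [hB h, mul_zero]

lemma blockTriangular_pow {ι α R : Type*} [Fintype ι] [DecidableEq ι] [LinearOrder α] [CommRing R]
    {b : ι → α} {A : Matrix ι ι R} (hA : A.BlockTriangular b) (n : ℕ) :
    (A ^ n).BlockTriangular b := by
  induction n with
  | zero => simpa [pow_zero] using Matrix.blockTriangular_one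
  | succ n ih => rw [pow_succ]; exact ih.mul hA

lemma diag_pow_of_triangular {ι α R : Type*} [Fintype ι] [DecidableEq ι] [LinearOrder α]
    [CommRing R] {b : ι → α} (hb : Function.Injective b) {A : Matrix ι ι R}
    (hA : A.BlockTriangular b) (n : ℕ) (i : ι) :
    (A ^ n) i i = (A i i) ^ n := by
  induction n with
  | zero => simp [pow_zero, Matrix.one_apply]
  | succ n ih =>
      rw [pow_succ, diag_mul_of_triangular hb (blockTriangular_pow hA n) hA, ih, pow_succ]

lemma blockTriangular_sum {ι α R β : Type*} [Fintype ι] [Preorder α] [CommRing R]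
    {b : ι → α} (s : Finset β) (f : β → Matrix ι ι R)
    (h : ∀ x ∈ s, (f x).BlockTriangular b) :
    (∑ x ∈ s, f x).BlockTriangular b := by
  classical
  induction s using Finset.induction with
  | empty => simp only [Finset.sum_empty]; exact Matrix.blockTriangular_zero
  | insert _ _ hx ih =>
      rw [Finset.sum_insert hx]
      exact (h _ (Finset.mem_insert_self _ _)).add
        (ih fun x hxs => h x (Finset.mem_insert_of_mem hxs))

lemma blockTriangular_smul {ι α R : Type*} [Preorder α] [CommRing R]
    {b : ι → α} {A : Matrix ι ι R} (c : R) (hA : A.BlockTriangular b) :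
    (c • A).BlockTriangular b := by
  intro i j hij
  simp [Matrix.smul_apply, hA hij]

/-- Powers of a conjugated matrix. -/
lemma my_conj_pow {ι R : Type*} [Fintype ι] [DecidableEq ι] [CommRing R]
    {A B A' : Matrix ι ι R} (h1 : A * A' = 1) (h2 : A' * A = 1) (i : ℕ) :
    (A * B * A') ^ i = A * B ^ i * A' := by
  induction i with
  | zero => simp [pow_zero, h1]
  | succ n ih =>
      rw [pow_succ, ih, pow_succ]
      calc A * B ^ n * A' * (A * B * A') = A * B ^ n * (A' * A) * B * A' := by
            simp only [Matrix.mul_assoc]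
          _ = A * (B ^ n * B) * A' := by rw [h2]; simp only [Matrix.mul_assoc, Matrix.mul_one]

/-- Every square complex matrix is similar to an upper triangular matrix. -/
lemma exists_triangular : ∀ (k : ℕ) (X : Matrix (Fin k) (Fin k) ℂ),
    ∃ P P' T : Matrix (Fin k) (Fin k) ℂ,
      P * P' = 1 ∧ P' * P = 1 ∧ T.BlockTriangular (id : Fin k → Fin k) ∧ X = P * T * P' := by
  intro k
  induction k with
  | zero =>
      intro X
      exact ⟨1, 1, X, by simp, by simp, fun i j h => i.elim0, by simp⟩
  | succ k IH =>
      intro X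
      -- find an eigenvalue
      have hdeg : X.charpoly.degree ≠ 0 := by
        rw [Matrix.charpoly_degree_eq_dim, Fintype.card_fin]
        exact_mod_cast Nat.succ_ne_zero k
      obtain ⟨μ, hμ⟩ := IsAlgClosed.exists_root X.charpoly hdeg
      have hdet : (Matrix.diagonal (fun _ : Fin (k+1) => μ) - X).det = 0 := by
        rw [← my_eval_charpoly]; exact hμ
      obtain ⟨v, hv0, hv⟩ := (Matrix.exists_mulVec_eq_zero_iff).mpr hdet
      have hXv : X *ᵥ v = μ • v := by
        have := hv
        rw [Matrix.sub_mulVec, sub_eq_zero] at this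
        rw [← this]
        funext i
        simp [Matrix.mulVec_diagonal]
      -- extend v to a basis
      have hli : LinearIndepOn ℂ id ({v} : Set (Fin (k+1) → ℂ)) :=
        (linearIndepOn_singleton_iff ℂ).mpr hv0
      let b := Module.Basis.extend hli
      have hvmem : v ∈ hli.extend (Set.subset_univ _) := Module.Basis.subset_extend hli rfl
      let i₀ : hli.extend (Set.subset_univ _) := ⟨v, hvmem⟩
      have hcard : Fintype.card (hli.extend (Set.subset_univ _)) = k + 1 := by
        rw [← Module.finrank_eq_card_basis b, Module.finrank_fintype_fun_eq_card,
          Fintype.card_fin]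
      let g : Fin (k+1) ≃ hli.extend (Set.subset_univ _) :=
        (Fintype.equivFinOfCardEq hcard).symm
      let e0 : Fin (k+1) ≃ hli.extend (Set.subset_univ _) :=
        (Equiv.swap (0 : Fin (k+1)) (g.symm i₀)).trans g
      let b' : Module.Basis (Fin (k+1)) ℂ (Fin (k+1) → ℂ) := b.reindex e0.symm
      have hb'0 : b' 0 = v := by
        have : b' 0 = b (e0 0) := by simp [b', Module.Basis.reindex_apply]
        rw [this]
        have : e0 0 = i₀ := by simp [e0, Equiv.swap_apply_left]
        rw [this]
        exact Module.Basis.extend_apply_self hli i₀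
      -- the change of basis matrix
      let Q : Matrix (Fin (k+1)) (Fin (k+1)) ℂ := (Pi.basisFun ℂ (Fin (k+1))).toMatrix b'
      let Q' : Matrix (Fin (k+1)) (Fin (k+1)) ℂ := b'.toMatrix (Pi.basisFun ℂ (Fin (k+1)))
      have hQQ' : Q * Q' = 1 := Module.Basis.toMatrix_mul_toMatrix_flip _ _
      have hQ'Q : Q' * Q = 1 := Module.Basis.toMatrix_mul_toMatrix_flip _ _
      have hQcol : ∀ i, Q i 0 = v i := by
        intro i
        simp [Q, Module.Basis.toMatrix_apply, hb'0]
      let A : Matrix (Fin (k+1)) (Fin (k+1)) ℂ := Q' * X * Q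
      have hXA : X = Q * A * Q' := by
        simp only [A, ← Matrix.mul_assoc, hQQ']
        simp only [Matrix.mul_assoc, hQQ']
        simp [Matrix.mul_assoc]
      have hA0 : ∀ j, A j 0 = if j = 0 then μ else 0 := by
        intro j
        have h1 : ∀ l, (X * Q) l 0 = μ * Q l 0 := by
          intro l
          have : (X * Q) l 0 = (X *ᵥ v) l := by
            simp [Matrix.mul_apply, Matrix.mulVec, dotProduct, hQcol]
          rw [this, hXv, hQcol]
          simp
        have h2 : A j 0 = ∑ l, Q' j l * (X * Q) l 0 := by
          simp [A, Matrix.mul_assoc, Matrix.mul_apply]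
        rw [h2]
        simp_rw [h1]
        have : ∑ l, Q' j l * (μ * Q l 0) = μ * ∑ l, Q' j l * Q l 0 := by
          rw [Finset.mul_sum]; congr 1; funext l; ring
        rw [this, ← Matrix.mul_apply, hQ'Q]
        by_cases hj : j = 0 <;> simp [Matrix.one_apply, hj]
      -- reindexing equivalence
      let e : Fin 1 ⊕ Fin k ≃ Fin (k+1) := finSumFinEquiv.trans (finCongr (Nat.add_comm 1 k))
      have he_inl : ∀ x : Fin 1, e (Sum.inl x) = 0 := by
        intro x
        have : x = 0 := Subsingleton.elim _ _
        subst this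
        rfl
      have he_inr : ∀ x : Fin k, e (Sum.inr x) = x.succ := by
        intro x
        apply Fin.ext
        simp [e, finSumFinEquiv, Fin.natAdd, Nat.add_comm]
      -- blocks of A
      let Y : Matrix (Fin k) (Fin k) ℂ := Matrix.of fun a c => A a.succ c.succ
      let r : Matrix (Fin 1) (Fin k) ℂ := Matrix.of fun _ c => A 0 c.succ
      let d : Matrix (Fin 1) (Fin 1) ℂ := Matrix.of fun _ _ => μ
      have hA' : Matrix.reindex e.symm e.symm A = Matrix.fromBlocks d r 0 Y := by
        ext x y
        rcases x with x | x <;> rcases y with y | y <;>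
          simp only [Matrix.reindex_apply, Matrix.submatrix_apply, Equiv.symm_symm,
            he_inl, he_inr, Matrix.fromBlocks_apply₁₁, Matrix.fromBlocks_apply₁₂,
            Matrix.fromBlocks_apply₂₁, Matrix.fromBlocks_apply₂₂]
        · rw [hA0 0]; simp [d]
        · rfl
        · rw [hA0 x.succ]
          simp [Fin.succ_ne_zero]
        · rfl
      have hA'' : A = Matrix.reindex e e (Matrix.fromBlocks d r 0 Y) := by
        rw [← hA']
        ext i j
        simp
      -- apply induction hypothesis
      obtain ⟨R, R', S, hRR', hR'R, hS, hY⟩ := IH Y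
      -- assemble
      let P₂ : Matrix (Fin 1 ⊕ Fin k) (Fin 1 ⊕ Fin k) ℂ := Matrix.fromBlocks 1 0 0 R
      let P₂' : Matrix (Fin 1 ⊕ Fin k) (Fin 1 ⊕ Fin k) ℂ := Matrix.fromBlocks 1 0 0 R'
      let T' : Matrix (Fin 1 ⊕ Fin k) (Fin 1 ⊕ Fin k) ℂ := Matrix.fromBlocks d (r * R) 0 S
      have hP₂ : P₂ * P₂' = 1 := by
        simp [P₂, P₂', Matrix.fromBlocks_multiply, hRR', Matrix.fromBlocks_one]
      have hP₂' : P₂' * P₂ = 1 := by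
        simp [P₂, P₂', Matrix.fromBlocks_multiply, hR'R, Matrix.fromBlocks_one]
      have hblocks : P₂ * T' * P₂' = Matrix.fromBlocks d r 0 Y := by
        simp only [P₂, P₂', T', Matrix.fromBlocks_multiply, Matrix.one_mul, Matrix.mul_one,
          Matrix.zero_mul, Matrix.mul_zero, add_zero, zero_add]
        rw [Matrix.mul_assoc r R R', hRR', Matrix.mul_one, hY]
      refine ⟨Q * Matrix.reindex e e P₂, Matrix.reindex e e P₂' * Q',
        Matrix.reindex e e T', ?_, ?_, ?_, ?_⟩
      · calc Q * Matrix.reindex e e P₂ * (Matrix.reindex e e P₂' * Q')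
            = Q * (Matrix.reindex e e P₂ * Matrix.reindex e e P₂') * Q' := by
              simp only [Matrix.mul_assoc]
          _ = 1 := by
              rw [Matrix.reindex_apply, Matrix.reindex_apply, Matrix.submatrix_mul_equiv,
                hP₂]
              simp [hQQ']
      · calc Matrix.reindex e e P₂' * Q' * (Q * Matrix.reindex e e P₂)
            = Matrix.reindex e e P₂' * (Q' * Q) * Matrix.reindex e e P₂ := by
              simp only [Matrix.mul_assoc]
          _ = 1 := by
              rw [hQ'Q, Matrix.mul_one, Matrix.reindex_apply, Matrix.reindex_apply,
                Matrix.submatrix_mul_equiv, hP₂']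
              simp
      · -- triangularity
        intro i j hij
        simp only [id_eq] at hij
        rw [Matrix.reindex_apply, Matrix.submatrix_apply]
        rcases hx : e.symm i with x | x <;> rcases hy : e.symm j with y | y
        · exfalso
          have : i = j := by
            have hi : i = e (Sum.inl x) := by rw [← hx]; simp
            have hj' : j = e (Sum.inl y) := by rw [← hy]; simp
            rw [hi, hj', he_inl, he_inl]
          exact absurd this (ne_of_gt hij)
        · exfalso
          have hi : i = e (Sum.inl x) := by rw [← hx]; simp
          have hj' : j = e (Sum.inr y) := by rw [← hy]; simp
          rw [hi, he_inl] at hij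
          exact Fin.not_lt_zero _ hij
        · rfl
        · have hi : i = e (Sum.inr x) := by rw [← hx]; simp
          have hj' : j = e (Sum.inr y) := by rw [← hy]; simp
          rw [hi, hj', he_inr, he_inr, Fin.succ_lt_succ_iff] at hij
          exact hS hij
      · rw [hXA, hA'']
        rw [← hblocks]
        have : Matrix.reindex e e (P₂ * T' * P₂')
            = Matrix.reindex e e P₂ * Matrix.reindex e e T' * Matrix.reindex e e P₂' := by
          simp only [Matrix.reindex_apply]
          rw [Matrix.submatrix_mul_equiv, Matrix.submatrix_mul_equiv]
        rw [this]
        simp only [Matrix.mul_assoc]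
/-- For `X₁ ∈ ℂ^{k×k}` and a complex polynomial `p`,
`det(Σ_{m=1}^ℓ p_m Σ_{i=0}^{m−1} (X₁ᵀ)^i ⊗ X₁^{m−1−i}) ≠ 0` if and only if
`Σ_{m=1}^ℓ p_m Σ_{i=0}^{m−1} μ₁^i μ₂^{m−1−i} ≠ 0` for every pair of eigenvalues
`μ₁, μ₂` of `X₁`. -/
theorem stmt_17 (k : ℕ) (X₁ : Matrix (Fin k) (Fin k) ℂ) (p : Polynomial ℂ) :
    (∑ m ∈ Finset.range (p.natDegree + 1), p.coeff m •
        ∑ i ∈ Finset.range m, (X₁ᵀ ^ i) ⊗ₖ (X₁ ^ (m - 1 - i))).det ≠ 0 ↔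
      ∀ μ₁ μ₂ : ℂ, X₁.charpoly.IsRoot μ₁ → X₁.charpoly.IsRoot μ₂ →
        (∑ m ∈ Finset.range (p.natDegree + 1), p.coeff m *
          ∑ i ∈ Finset.range m, μ₁ ^ i * μ₂ ^ (m - 1 - i)) ≠ 0 := by
  classical
  obtain ⟨P, P', T, hPP', hP'P, hT, hX⟩ := exists_triangular k X₁
  set N : Matrix (Fin k × Fin k) (Fin k × Fin k) ℂ :=
    ∑ m ∈ Finset.range (p.natDegree + 1), p.coeff m •
      ∑ i ∈ Finset.range m, (Tᵀ ^ i) ⊗ₖ (T ^ (m - 1 - i)) with hNdef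
  set U : Matrix (Fin k × Fin k) (Fin k × Fin k) ℂ := P'ᵀ ⊗ₖ P with hUdef
  set V : Matrix (Fin k × Fin k) (Fin k × Fin k) ℂ := Pᵀ ⊗ₖ P' with hVdef
  have hXt : X₁ᵀ = P'ᵀ * Tᵀ * Pᵀ := by
    rw [hX, Matrix.transpose_mul, Matrix.transpose_mul, Matrix.mul_assoc]
  have hAA' : P'ᵀ * Pᵀ = 1 := by rw [← Matrix.transpose_mul, hPP', Matrix.transpose_one]
  have hA'A : Pᵀ * P'ᵀ = 1 := by rw [← Matrix.transpose_mul, hP'P, Matrix.transpose_one]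
  have h1 : ∀ i : ℕ, X₁ᵀ ^ i = P'ᵀ * Tᵀ ^ i * Pᵀ := fun i => by
    rw [hXt]; exact my_conj_pow hAA' hA'A i
  have h2 : ∀ j : ℕ, X₁ ^ j = P * T ^ j * P' := fun j => by
    rw [hX]; exact my_conj_pow hPP' hP'P j
  have hMN : (∑ m ∈ Finset.range (p.natDegree + 1), p.coeff m •
        ∑ i ∈ Finset.range m, (X₁ᵀ ^ i) ⊗ₖ (X₁ ^ (m - 1 - i))) = U * N * V := by
    rw [hNdef, Finset.mul_sum, Finset.sum_mul]
    refine Finset.sum_congr rfl fun m _ => ?_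
    rw [mul_smul_comm, smul_mul_assoc]
    congr 1
    rw [Finset.mul_sum, Finset.sum_mul]
    refine Finset.sum_congr rfl fun i _ => ?_
    rw [h1 i, h2 (m - 1 - i), Matrix.mul_kronecker_mul, Matrix.mul_kronecker_mul]
  have hUV : U * V = 1 := by
    rw [hUdef, hVdef, ← Matrix.mul_kronecker_mul, hAA', hPP', Matrix.one_kronecker_one]
  have hdetMN : (∑ m ∈ Finset.range (p.natDegree + 1), p.coeff m •
        ∑ i ∈ Finset.range m, (X₁ᵀ ^ i) ⊗ₖ (X₁ ^ (m - 1 - i))).det = N.det := by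
    rw [hMN, Matrix.det_mul, Matrix.det_mul, mul_right_comm, ← Matrix.det_mul, hUV,
      Matrix.det_one, one_mul]
  -- triangularity of N
  let eβ : Fin k × Fin k ≃ Lex ((Fin k)ᵒᵈ × Fin k) :=
    (Equiv.prodCongr OrderDual.toDual (Equiv.refl (Fin k))).trans toLex
  have hTt : Tᵀ.BlockTriangular (OrderDual.toDual ∘ id) := hT.transpose
  have hkron : ∀ i j : ℕ, ((Tᵀ ^ i) ⊗ₖ (T ^ j)).BlockTriangular (fun x => eβ x) := by
    intro i j x y h
    have h' : toLex (OrderDual.toDual y.1, y.2) < toLex (OrderDual.toDual x.1, x.2) := h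
    rw [Prod.Lex.lt_iff] at h'
    rw [Matrix.kronecker_apply]
    rcases h' with h' | ⟨_, h2'⟩
    · rw [blockTriangular_pow hTt i h', zero_mul]
    · rw [blockTriangular_pow hT j (show y.2 < x.2 from h2'), mul_zero]
  have hN : N.BlockTriangular (fun x => eβ x) := by
    rw [hNdef]
    exact blockTriangular_sum _ _ fun m _ => blockTriangular_smul _
      (blockTriangular_sum _ _ fun i _ => hkron i (m - 1 - i))
  have hdetN : N.det = ∏ x : Fin k × Fin k, N x x := by
    rw [← Matrix.det_submatrix_equiv_self eβ.symm N]
    have htri : (N.submatrix eβ.symm eβ.symm).BlockTriangular id := by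
      have hcomp : ((fun x => eβ x) ∘ ⇑eβ.symm) = (id : Lex ((Fin k)ᵒᵈ × Fin k) → _) :=
        funext fun i => eβ.apply_symm_apply i
      exact hcomp ▸ hN.submatrix
    rw [Matrix.det_of_upperTriangular htri]
    exact Fintype.prod_equiv eβ.symm _ _ fun x => rfl
  have hNdiag : ∀ x : Fin k × Fin k, N x x =
      ∑ m ∈ Finset.range (p.natDegree + 1), p.coeff m *
        ∑ i ∈ Finset.range m, (T x.1 x.1) ^ i * (T x.2 x.2) ^ (m - 1 - i) := by
    intro x
    rw [hNdef, Matrix.sum_apply]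
    refine Finset.sum_congr rfl fun m _ => ?_
    rw [Matrix.smul_apply, Matrix.sum_apply, smul_eq_mul]
    congr 1
    refine Finset.sum_congr rfl fun i _ => ?_
    rw [Matrix.kronecker_apply,
      diag_pow_of_triangular (OrderDual.toDual.injective.comp Function.injective_id) hTt,
      diag_pow_of_triangular Function.injective_id hT, Matrix.transpose_apply]
  -- characteristic polynomial of X₁
  have hPc : (C : ℂ →+* ℂ[X]).mapMatrix P * (C : ℂ →+* ℂ[X]).mapMatrix P' = 1 := by
    rw [← _root_.map_mul, hPP', _root_.map_one]
  have hs : Matrix.scalar (Fin k) (X : ℂ[X]) =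
      (X : ℂ[X]) • (1 : Matrix (Fin k) (Fin k) ℂ[X]) := by
    rw [Matrix.smul_one_eq_diagonal]; rfl
  have hcm : charmatrix X₁ =
      (C : ℂ →+* ℂ[X]).mapMatrix P * charmatrix T * (C : ℂ →+* ℂ[X]).mapMatrix P' := by
    rw [charmatrix, charmatrix, hX, _root_.map_mul, _root_.map_mul, mul_sub, sub_mul]
    congr 1
    symm
    rw [hs, mul_smul_comm, Matrix.mul_one, smul_mul_assoc, hPc]
  have hchar : X₁.charpoly = ∏ a : Fin k, ((X : ℂ[X]) - C (T a a)) := by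
    rw [Matrix.charpoly, hcm, Matrix.det_mul, Matrix.det_mul, mul_right_comm,
      ← Matrix.det_mul, hPc, Matrix.det_one, one_mul,
      Matrix.det_of_upperTriangular hT.charmatrix]
    exact Finset.prod_congr rfl fun a _ => charmatrix_apply_eq T a
  have hroot : ∀ μ : ℂ, X₁.charpoly.IsRoot μ ↔ ∃ a : Fin k, T a a = μ := by
    intro μ
    rw [hchar, Polynomial.IsRoot.def, Polynomial.eval_prod, Finset.prod_eq_zero_iff]
    simp [sub_eq_zero, eq_comm]
  rw [hdetMN, hdetN]
  constructor
  · intro h μ₁ μ₂ hμ₁ hμ₂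
    obtain ⟨a, ha⟩ := (hroot μ₁).mp hμ₁
    obtain ⟨c, hc⟩ := (hroot μ₂).mp hμ₂
    rw [Finset.prod_ne_zero_iff] at h
    have := h (a, c) (Finset.mem_univ _)
    rw [hNdiag (a, c)] at this
    rw [← ha, ← hc]
    exact this
  · intro h
    rw [Finset.prod_ne_zero_iff]
    intro x _
    rw [hNdiag x]
    exact h _ _ ((hroot _).mpr ⟨x.1, rfl⟩) ((hroot _).mpr ⟨x.2, rfl⟩)
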